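/- Suppose a configuration C satisfies Tree Initially and a configuration C' is obtained from C by performing an applicable Add, Insert, Jump, LeafSwap, or MixSwap. Define |E| = Σ_{i∈ℛ} |E_i|, Y = Σ_{u∈V} Σ_{i∈ℛ} min(L_i(u), N), and S = Σ_{u∈V} u · (Σ_{i∈ℛ} i · d_i(u)). Then either |E(C')| ≥ |E(C)| + 1, or (|E(C')| = |E(C)| and Y(C') ≤ Y(C) − 1), or (|E(C')| = |E(C)|, Y(C') = Y(C), and S(C') ≥ S(C) + 1); that is, the triple (−|E|, Y, −S) strictly decreases lexicographically. -/

import Mathlib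

/-!
Add and Insert create an edge; every other move keeps the number of edges of each colour. A Jump,
and a MixSwap in each of its two colours, re-hangs a node `x` below a node `q` with
`L(q) + 1 ≤ L(x)`. Induction along the old shortest-path tree (every node is entered from a parent
of smaller depth) shows that no depth increases, while the depth of `x` becomes at most
`L(q) + 1`, a strict drop when `L(q) + 1 < L(x)`. Truncation at `N` cannot hide the drop: a node
of depth `a` sees every depth `0, …, a` occupied, and `x` is one more node. A LeafSwap bounds the
new depths by the old ones composed with the transposition `(u v)`, which leaves `Y` unchanged,
and drops strictly at a child of `u`. If a MixSwap changes no depth, colour `i` moves one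
out-edge from `u` to `v` and colour `j` one from `v` to `u`, so `S` grows by `(u - v)(j - i) > 0`.
-/

namespace P2P

/-- A walk of length `n` from `r` to `u` in the edge set `E`. -/
def Walk {α : Type*} (E : Finset (α × α)) (r u : α) (n : ℕ) : Prop :=
  ∃ f : ℕ → α, f 0 = r ∧ f n = u ∧ ∀ k < n, (f k, f (k + 1)) ∈ E

/-- Depth of `u` below root `r`: minimal number of edges of a directed walk
(equivalently, of a directed path) from `r` to `u`; `⊤` if unreachable. -/
noncomputable def depth {α : Type*} (E : Finset (α × α)) (r u : α) : ℕ∞ :=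
  sInf {n : ℕ∞ | ∃ m : ℕ, n = (m : ℕ∞) ∧ Walk E r u m}

/-- Out-degree of `u` in `E`. -/
def outDeg {α : Type*} [DecidableEq α] (E : Finset (α × α)) (u : α) : ℕ :=
  (E.filter fun e => e.1 = u).card

/-- In-degree of `u` in `E`. -/
def inDeg {α : Type*} [DecidableEq α] (E : Finset (α × α)) (u : α) : ℕ :=
  (E.filter fun e => e.2 = u).card

/-- A configuration assigns to each color an edge set. -/
abbrev Cfg := ℕ → Finset (ℕ × ℕ)

/-- The node set `V = {1, …, N}`. -/
def V (N : ℕ) : Finset ℕ := Finset.Icc 1 N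

/-- The root set `ℛ = {1, …, M}`. -/
def R (M : ℕ) : Finset ℕ := Finset.Icc 1 M

/-- `u` has an incoming `i`-edge (root `i` counts its server link). -/
def HasIn (E : Cfg) (i u : ℕ) : Prop := (∃ w, (w, u) ∈ E i) ∨ u = i

/-- Incoming count of `u`: incoming edges of all colors, plus 1 if `u` is a root. -/
def incCount (M : ℕ) (E : Cfg) (u : ℕ) : ℕ :=
  (∑ i ∈ R M, inDeg (E i) u) + (if u ∈ R M then 1 else 0)

/-- Total out-degree `d(u)`. -/
def dtot (M : ℕ) (E : Cfg) (u : ℕ) : ℕ := ∑ i ∈ R M, outDeg (E i) u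

/-- Edges are ordered pairs of distinct nodes of `V`. -/
def ValidEdges (N M : ℕ) (E : Cfg) : Prop :=
  ∀ i ∈ R M, ∀ e ∈ E i, e.1 ∈ V N ∧ e.2 ∈ V N ∧ e.1 ≠ e.2

/-- Assumption (Tree Initially). -/
def TreeInit (N M K : ℕ) (E : Cfg) : Prop :=
  (∀ u ∈ V N, incCount M E u ≤ K) ∧
  (∀ i ∈ R M, ∀ u ∈ V N, inDeg (E i) u ≤ 1) ∧
  (∀ i ∈ R M, inDeg (E i) i = 0)

/-- A node is available if it has spare capacity and some incoming edge. -/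
def Available (M : ℕ) (E : Cfg) (dbar : ℕ → ℕ) (v : ℕ) : Prop :=
  dtot M E v < dbar v ∧ ∃ i ∈ R M, HasIn E i v

/-- An Add is applicable at `(u_p, u, i)`. -/
def AddApp (N M K : ℕ) (E : Cfg) (dbar : ℕ → ℕ) (up u i : ℕ) : Prop :=
  i ∈ R M ∧ up ∈ V N ∧ u ∈ V N ∧
  incCount M E u < K ∧ ¬ HasIn E i u ∧ HasIn E i up ∧ dtot M E up < dbar up

/-- An Insert is applicable at `(u_p, u, i)` with `i`-child `u_c` of `u_p`. -/
def InsertApp (N M K : ℕ) (E : Cfg) (up u uc i : ℕ) : Prop :=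
  i ∈ R M ∧ up ∈ V N ∧ u ∈ V N ∧
  incCount M E u < K ∧ ¬ HasIn E i u ∧ HasIn E i up ∧ (up, uc) ∈ E i

/-- A Jump is applicable at `(u, v, i)`. -/
def JumpApp (M : ℕ) (E : Cfg) (dbar : ℕ → ℕ) (u v i : ℕ) : Prop :=
  i ∈ R M ∧ (∃ up, (up, u) ∈ E i) ∧ Available M E dbar v ∧ HasIn E i v ∧
  depth (E i) i v + 1 < depth (E i) i u

/-- A LeafSwap is applicable at `(u, v, i)`. -/
def LeafSwapApp (M : ℕ) (E : Cfg) (u v i : ℕ) : Prop :=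
  i ∈ R M ∧ (∃ up, (up, u) ∈ E i) ∧ (∃ vp, (vp, v) ∈ E i) ∧
  outDeg (E i) v = 0 ∧ 0 < outDeg (E i) u ∧
  depth (E i) i v < depth (E i) i u

/-- A MixSwap is applicable at `(u, u_c, v, v_c, i, j)`. -/
def MixSwapApp (M : ℕ) (E : Cfg) (u uc v vc i j : ℕ) : Prop :=
  i ∈ R M ∧ j ∈ R M ∧ i ≠ j ∧ u ≠ v ∧
  (u, uc) ∈ E i ∧ (v, vc) ∈ E j ∧ uc ≠ v ∧ vc ≠ u ∧
  depth (E i) i v ≤ depth (E i) i u ∧ depth (E j) j u ≤ depth (E j) j v ∧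
  ((depth (E i) i u, depth (E j) j u) ≠ (depth (E i) i v, depth (E j) j v) ∨
    ((u : ℤ) - (v : ℤ)) * ((j : ℤ) - (i : ℤ)) > 0)

/-- Result of performing an Add. -/
def doAdd (E : Cfg) (up u i : ℕ) : Cfg :=
  fun l => if l = i then insert (up, u) (E l) else E l

/-- Result of performing an Insert. -/
def doInsert (E : Cfg) (up u uc i : ℕ) : Cfg :=
  fun l => if l = i then insert (up, u) (insert (u, uc) ((E l).erase (up, uc))) else E l

/-- Result of performing a Jump (parent `u_p` is replaced by `v`). -/
def doJump (E : Cfg) (up u v i : ℕ) : Cfg :=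
  fun l => if l = i then insert (v, u) ((E l).erase (up, u)) else E l

/-- Result of performing a LeafSwap (`u` and `v` exchange parents). -/
def doLeafSwap (E : Cfg) (up u vp v i : ℕ) : Cfg :=
  fun l => if l = i then
    insert (up, v) (insert (vp, u) (((E l).erase (up, u)).erase (vp, v))) else E l

/-- Result of performing a MixSwap (`u` and `v` exchange the children `u_c`, `v_c`). -/
def doMixSwap (E : Cfg) (u uc v vc i j : ℕ) : Cfg :=
  fun l => if l = i then insert (v, uc) ((E l).erase (u, uc))
    else if l = j then insert (u, vc) ((E l).erase (v, vc)) else E l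

/-- One step of the algorithm: perform any applicable Add, Insert, Jump,
LeafSwap or MixSwap. -/
def Step (N M K : ℕ) (dbar : ℕ → ℕ) (E E' : Cfg) : Prop :=
  (∃ up u i, AddApp N M K E dbar up u i ∧ E' = doAdd E up u i) ∨
  (∃ up u uc i, InsertApp N M K E up u uc i ∧ E' = doInsert E up u uc i) ∨
  (∃ up u v i, (up, u) ∈ E i ∧ JumpApp M E dbar u v i ∧ E' = doJump E up u v i) ∨
  (∃ up u vp v i, (up, u) ∈ E i ∧ (vp, v) ∈ E i ∧ LeafSwapApp M E u v i ∧
      E' = doLeafSwap E up u vp v i) ∨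
  (∃ u uc v vc i j, MixSwapApp M E u uc v vc i j ∧ E' = doMixSwap E u uc v vc i j)

/-- Total number of edges `|E|`. -/
def numE (M : ℕ) (E : Cfg) : ℕ := ∑ i ∈ R M, (E i).card

/-- `Y = Σ_u Σ_i min(L_i(u), N)`. -/
noncomputable def Yval (N M : ℕ) (E : Cfg) : ℕ :=
  ∑ u ∈ V N, ∑ i ∈ R M, (min (depth (E i) i u) (N : ℕ∞)).toNat

/-- `S = Σ_u u · Σ_i i · d_i(u)`. -/
def Sval (N M : ℕ) (E : Cfg) : ℕ :=
  ∑ u ∈ V N, u * ∑ i ∈ R M, i * outDeg (E i) u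


section Depth

variable {α : Type*} {E : Finset (α × α)} {r u w a b z : α} {m n : ℕ}

theorem walk_zero_iff : Walk E r u 0 ↔ u = r :=
  ⟨fun ⟨_, h0, h1, _⟩ => h1.symm.trans h0, fun h => ⟨fun _ => r, rfl, h.symm, by simp⟩⟩

theorem Walk.exists_last (h : Walk E r u (m + 1)) : ∃ a, Walk E r a m ∧ (a, u) ∈ E := by
  obtain ⟨f, h0, hm, hE⟩ := h
  exact ⟨f m, ⟨f, h0, rfl, fun k hk => hE k (by omega)⟩, hm ▸ hE m (by omega)⟩

theorem Walk.snoc (h : Walk E r a m) (hab : (a, b) ∈ E) :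
    Walk E r b (m + 1) := by
  obtain ⟨f, h0, hm, hE⟩ := h
  refine ⟨Function.update f (m + 1) b, by simp [h0], by simp, fun k hk => ?_⟩
  rcases Nat.lt_succ_iff_lt_or_eq.mp hk with hk | rfl
  · rw [Function.update_of_ne (by omega), Function.update_of_ne (by omega)]
    exact hE k hk
  · rw [Function.update_of_ne (by omega), Function.update_self, hm]
    exact hab

theorem depth_le_of_walk (h : Walk E r u m) : depth E r u ≤ m :=
  sInf_le ⟨m, rfl, h⟩

theorem exists_walk_of_depth_ne_top (h : depth E r u ≠ ⊤) :
    ∃ m : ℕ, depth E r u = m ∧ Walk E r u m := by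
  have hne : {n : ℕ∞ | ∃ m : ℕ, n = m ∧ Walk E r u m}.Nonempty := by
    by_contra hemp
    rw [Set.not_nonempty_iff_eq_empty] at hemp
    exact h (by rw [depth, hemp, sInf_empty])
  exact csInf_mem hne

@[simp]
theorem depth_self : depth E r r = 0 :=
  nonpos_iff_eq_zero.mp (depth_le_of_walk (walk_zero_iff.mpr rfl))

theorem depth_le_depth_add_one (h : (a, b) ∈ E) : depth E r b ≤ depth E r a + 1 := by
  rcases eq_or_ne (depth E r a) ⊤ with ha | ha
  · simp [ha]
  obtain ⟨m, hm, hw⟩ := exists_walk_of_depth_ne_top ha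
  rw [hm]
  exact_mod_cast depth_le_of_walk (hw.snoc h)

theorem exists_parent_of_depth_ne_top (h : depth E r u ≠ ⊤) (hu : u ≠ r) :
    ∃ a, (a, u) ∈ E ∧ depth E r a + 1 = depth E r u := by
  obtain ⟨m, hm, hw⟩ := exists_walk_of_depth_ne_top h
  cases m with
  | zero => exact absurd (walk_zero_iff.mp hw) hu
  | succ m =>
    obtain ⟨a, ha, hau⟩ := hw.exists_last
    refine ⟨a, hau, le_antisymm ?_ (depth_le_depth_add_one hau)⟩
    rw [hm, Nat.cast_add_one]
    gcongr
    exact depth_le_of_walk ha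

theorem depth_le_of_induction {L : α → ℕ∞}
    (h : ∀ w, w ≠ r → L w ≠ ⊤ → (∀ c, L c < L w → depth E r c ≤ L c) → depth E r w ≤ L w)
    (w : α) : depth E r w ≤ L w := by
  induction w using (InvImage.wf L wellFounded_lt).induction with
  | _ w ih =>
    by_cases hwr : w = r
    · simp [hwr]
    by_cases hw : L w = ⊤
    · simp [hw]
    exact h w hwr hw ih

theorem exists_depth_eq_of_le {s : Finset α} (hr : r ∈ s) (hs : ∀ e ∈ E, e.2 ∈ s)
    (hw : depth E r w = n) {k : ℕ} (hk : k ≤ n) : ∃ c ∈ s, depth E r c = k := by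
  induction n generalizing w with
  | zero => exact ⟨r, hr, by simp [Nat.le_zero.mp hk]⟩
  | succ n ih =>
    have hwr : w ≠ r := by
      rintro rfl
      rw [depth_self] at hw
      exact n.succ_ne_zero (by exact_mod_cast hw.symm)
    obtain ⟨a, ha, haw⟩ :=
      exists_parent_of_depth_ne_top (by rw [hw]; exact ENat.natCast_ne_top _) hwr
    rcases Nat.of_le_succ hk with hk | rfl
    · rw [hw, Nat.cast_add_one] at haw
      exact ih (WithTop.add_right_cancel ENat.one_ne_top haw) hk
    · exact ⟨w, hs _ ha, hw⟩

theorem add_two_le_card_of_lt_depth [DecidableEq α] {s : Finset α} (hr : r ∈ s)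
    (hs : ∀ e ∈ E, e.2 ∈ s) (hw : depth E r w = n) (hz : z ∈ s)
    (hzn : (n : ℕ∞) < depth E r z) : n + 2 ≤ s.card := by
  set T := s.filter fun c => depth E r c ≤ n
  have hrange : Finset.range (n + 1) ⊆ T.image fun c => (depth E r c).toNat := by
    intro k hk
    have hkn : k ≤ n := Nat.lt_succ_iff.mp (Finset.mem_range.mp hk)
    obtain ⟨c, hc, hck⟩ := exists_depth_eq_of_le hr hs hw hkn
    exact Finset.mem_image.mpr
      ⟨c, Finset.mem_filter.mpr ⟨hc, by rw [hck]; exact_mod_cast hkn⟩, by simp [hck]⟩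
  have hT : T.card < s.card :=
    Finset.card_lt_card (Finset.filter_ssubset.mpr ⟨z, hz, not_le.mpr hzn⟩)
  have := (Finset.card_le_card hrange).trans Finset.card_image_le
  rw [Finset.card_range] at this
  omega

end Depth

section Reparent

variable {α : Type*} [DecidableEq α] {G : Finset (α × α)} {r p q x : α}

def reparent (G : Finset (α × α)) (p q x : α) : Finset (α × α) :=
  insert (q, x) (G.erase (p, x))

theorem depth_reparent_le (hq : depth G r q + 1 ≤ depth G r x) (w : α) :
    depth (reparent G p q x) r w ≤ depth G r w := by
  refine depth_le_of_induction (fun w hwr hw ih => ?_) w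
  obtain ⟨a, ha, haw⟩ := exists_parent_of_depth_ne_top hw hwr
  by_cases hpx : (a, w) = (p, x)
  · obtain ⟨-, rfl⟩ := Prod.mk.inj hpx
    calc depth (reparent G p q w) r w ≤ depth (reparent G p q w) r q + 1 :=
          depth_le_depth_add_one (Finset.mem_insert_self _ _)
      _ ≤ depth G r q + 1 := by gcongr; exact ih q ((ENat.add_one_le_iff' hw).mp hq)
      _ ≤ depth G r w := hq
  · calc depth (reparent G p q x) r w ≤ depth (reparent G p q x) r a + 1 :=
          depth_le_depth_add_one (Finset.mem_insert_of_mem (Finset.mem_erase.mpr ⟨hpx, ha⟩))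
      _ ≤ depth G r a + 1 := by gcongr; exact ih a ((ENat.add_one_le_iff' hw).mp haw.le)
      _ = depth G r w := haw

theorem depth_reparent_self_le (hq : depth G r q + 1 ≤ depth G r x) :
    depth (reparent G p q x) r x ≤ depth G r q + 1 :=
  calc depth (reparent G p q x) r x ≤ depth (reparent G p q x) r q + 1 :=
        depth_le_depth_add_one (Finset.mem_insert_self _ _)
    _ ≤ depth G r q + 1 := by gcongr; exact depth_reparent_le hq q

theorem depth_le_depth_reparent (hpx : (p, x) ∈ G) (hpq : depth G r p ≤ depth G r q) (w : α) :
    depth G r w ≤ depth (reparent G p q x) r w := by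
  refine depth_le_of_induction (fun w hwr hw ih => ?_) w
  obtain ⟨a, ha, haw⟩ := exists_parent_of_depth_ne_top hw hwr
  have iha := ih a ((ENat.add_one_le_iff' hw).mp haw.le)
  rcases Finset.mem_insert.mp ha with h | h
  · obtain ⟨rfl, rfl⟩ := Prod.mk.inj h
    calc depth G r w ≤ depth G r p + 1 := depth_le_depth_add_one hpx
      _ ≤ depth G r a + 1 := by gcongr
      _ ≤ depth (reparent G p a w) r a + 1 := by gcongr
      _ = depth (reparent G p a w) r w := haw
  · calc depth G r w ≤ depth G r a + 1 := depth_le_depth_add_one (Finset.mem_of_mem_erase h)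
      _ ≤ depth (reparent G p q x) r a + 1 := by gcongr
      _ = depth (reparent G p q x) r w := haw

theorem card_reparent (hpx : (p, x) ∈ G) (hqx : (q, x) ∉ G) :
    (reparent G p q x).card = G.card := by
  rw [reparent, Finset.card_insert_of_notMem fun h => hqx (Finset.mem_of_mem_erase h),
    Finset.card_erase_add_one hpx]

theorem sum_fst_reparent {M : Type*} [AddCommMonoid M] (f : α → M) (hpx : (p, x) ∈ G)
    (hqx : (q, x) ∉ G) : ∑ e ∈ reparent G p q x, f e.1 + f p = ∑ e ∈ G, f e.1 + f q := by
  rw [reparent, Finset.sum_insert fun h => hqx (Finset.mem_of_mem_erase h), add_assoc,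
    Finset.sum_erase_add _ _ hpx, add_comm]

end Reparent

section Forest

variable {α : Type*} {G : Finset (α × α)} {r p x up u vp v : α}
  {s : Finset α}

structure UniqueParents (G : Finset (α × α)) (r : α) (s : Finset α) : Prop where
  root_mem : r ∈ s
  fst_mem : ∀ e ∈ G, e.1 ∈ s
  snd_mem : ∀ e ∈ G, e.2 ∈ s
  fst_ne_snd : ∀ e ∈ G, e.1 ≠ e.2
  parent_unique : ∀ {a b x}, (a, x) ∈ G → (b, x) ∈ G → a = b
  root_not_child : ∀ a, (a, r) ∉ G

theorem UniqueParents.depth_eq_add_one (hG : UniqueParents G r s) (h : (p, x) ∈ G) :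
    depth G r x = depth G r p + 1 := by
  refine le_antisymm (depth_le_depth_add_one h) ?_
  rcases eq_or_ne (depth G r x) ⊤ with hx | hx
  · simp [hx]
  obtain ⟨a, ha, hax⟩ :=
    exists_parent_of_depth_ne_top hx (by rintro rfl; exact hG.root_not_child p h)
  rw [← hax, hG.parent_unique ha h]

variable [DecidableEq α]

theorem depth_swap_le (hvu : depth G r v < depth G r u) (hav : p ≠ v) :
    depth G r (Equiv.swap u v p) ≤ depth G r p := by
  by_cases hpu : p = u
  · rw [hpu, Equiv.swap_apply_left]
    exact hvu.le
  · rw [Equiv.swap_apply_of_ne_of_ne hpu hav]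

def swapParents (G : Finset (α × α)) (up u vp v : α) : Finset (α × α) :=
  insert (up, v) (insert (vp, u) ((G.erase (up, u)).erase (vp, v)))

theorem depth_swapParents_le (hu : (up, u) ∈ G) (hv : (vp, v) ∈ G) (hleaf : ∀ c, (v, c) ∉ G)
    (hdu : depth G r u = depth G r up + 1) (hdv : depth G r v = depth G r vp + 1)
    (hvu : depth G r v < depth G r u) (w : α) :
    depth (swapParents G up u vp v) r w ≤ depth G r (Equiv.swap u v w) := by
  set G' := swapParents G up u vp v
  have hvpv : vp ≠ v := fun h => hleaf v (h ▸ hv)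
  have hupv : up ≠ v := fun h => hleaf u (h ▸ hu)
  have hvpu : vp ≠ u := by
    rintro rfl
    exact (le_self_add.trans_eq hdv.symm).not_gt hvu
  -- `u` takes over the place of `v` below `vp`, and `v` that of `u` below `up`.
  refine depth_le_of_induction (L := fun w => depth G r (Equiv.swap u v w))
    (fun w hwr hw ih => ?_) w
  by_cases hwu : w = u
  · rw [hwu, Equiv.swap_apply_left] at hw ih ⊢
    have ihvp := ih vp
    rw [Equiv.swap_apply_of_ne_of_ne hvpu hvpv] at ihvp
    calc depth G' r u ≤ depth G' r vp + 1 := depth_le_depth_add_one (by simp [G', swapParents])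
      _ ≤ depth G r vp + 1 := by gcongr; exact ihvp ((ENat.add_one_le_iff' hw).mp hdv.ge)
      _ = depth G r v := hdv.symm
  by_cases hwv : w = v
  · rw [hwv, Equiv.swap_apply_right] at hw ih ⊢
    have hupu : up ≠ u := by
      rintro rfl
      exact ((ENat.add_one_le_iff' hw).mp hdu.ge).ne rfl
    have ihup := ih up
    rw [Equiv.swap_apply_of_ne_of_ne hupu hupv] at ihup
    calc depth G' r v ≤ depth G' r up + 1 := depth_le_depth_add_one (by simp [G', swapParents])
      _ ≤ depth G r up + 1 := by gcongr; exact ihup ((ENat.add_one_le_iff' hw).mp hdu.ge)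
      _ = depth G r u := hdu.symm
  rw [Equiv.swap_apply_of_ne_of_ne hwu hwv] at hw ih ⊢
  obtain ⟨a, ha, haw⟩ := exists_parent_of_depth_ne_top hw hwr
  have hav : a ≠ v := fun h => hleaf w (h ▸ ha)
  have haG' : (a, w) ∈ G' := by simp [G', swapParents, ha, hwu, hwv]
  have hlt : depth G r (Equiv.swap u v a) < depth G r w :=
    (depth_swap_le hvu hav).trans_lt ((ENat.add_one_le_iff' hw).mp haw.le)
  calc depth G' r w ≤ depth G' r a + 1 := depth_le_depth_add_one haG'
    _ ≤ depth G r a + 1 := by gcongr; exact (ih a hlt).trans (depth_swap_le hvu hav)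
    _ = depth G r w := haw

theorem card_swapParents (hu : (up, u) ∈ G) (hv : (vp, v) ∈ G) (huv : u ≠ v)
    (hvpu : (vp, u) ∉ G) (hupv : (up, v) ∉ G) : (swapParents G up u vp v).card = G.card := by
  have hv' : (vp, v) ∈ G.erase (up, u) := Finset.mem_erase.mpr ⟨by simp [huv.symm], hv⟩
  have h1 : (vp, u) ∉ (G.erase (up, u)).erase (vp, v) :=
    fun h => hvpu (Finset.mem_of_mem_erase (Finset.mem_of_mem_erase h))
  have h2 : (up, v) ∉ insert (vp, u) ((G.erase (up, u)).erase (vp, v)) := by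
    simp only [Finset.mem_insert, Prod.mk.injEq, huv.symm, and_false, false_or]
    exact fun h => hupv (Finset.mem_of_mem_erase (Finset.mem_of_mem_erase h))
  rw [swapParents, Finset.card_insert_of_notMem h2, Finset.card_insert_of_notMem h1,
    Finset.card_erase_add_one hv', Finset.card_erase_add_one hu]

end Forest

section TruncatedDepthSum

variable {α : Type*} {G : Finset (α × α)} {r p q x up u vp v c : α}
  {s : Finset α}

theorem toNat_min_le_toNat_min {d d' : ℕ∞} (h : d' ≤ d) (n : ℕ) :
    (min d' n).toNat ≤ (min d n).toNat :=
  ENat.toNat_le_toNat (min_le_min_right _ h) (ne_top_of_le_ne_top (ENat.natCast_ne_top n)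
    (min_le_right _ _))

theorem toNat_min_lt_toNat_min {d d' : ℕ∞} {a n : ℕ} (hd' : d' ≤ a + 1) (hd : (a : ℕ∞) + 1 < d)
    (hn : a + 2 ≤ n) : (min d' n).toNat < (min d n).toNat := by
  have h1 : (min d' n).toNat ≤ a + 1 :=
    ENat.toNat_le_of_le_natCast (by push_cast; exact min_le_of_left_le hd')
  have h2 : ((a + 2 : ℕ) : ℕ∞) ≤ min d n := by
    refine le_min ?_ (by exact_mod_cast hn)
    rw [Nat.cast_add, Nat.cast_two, ← one_add_one_eq_two, ← add_assoc]
    exact Order.add_one_le_of_lt hd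
  have := ENat.toNat_le_toNat h2 (ne_top_of_le_ne_top (ENat.natCast_ne_top n) (min_le_right _ _))
  rw [ENat.toNat_natCast] at this
  omega

noncomputable def depthSum (s : Finset α) (G : Finset (α × α)) (r : α) : ℕ :=
  ∑ w ∈ s, (min (depth G r w) s.card).toNat

theorem depthSum_lt_sum_of_le {G' : Finset (α × α)} {L : α → ℕ∞} {a : ℕ}
    (hle : ∀ w, depth G' r w ≤ L w) (hx : x ∈ s) (hG'x : depth G' r x ≤ a + 1)
    (hLx : (a : ℕ∞) + 1 < L x) (ha : a + 2 ≤ s.card) :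
    depthSum s G' r < ∑ w ∈ s, (min (L w) s.card).toNat :=
  Finset.sum_lt_sum (fun w _ => toNat_min_le_toNat_min (hle w) _)
    ⟨x, hx, toNat_min_lt_toNat_min hG'x hLx ha⟩

variable [DecidableEq α]

theorem depthSum_reparent_le (hq : depth G r q + 1 ≤ depth G r x) :
    depthSum s (reparent G p q x) r ≤ depthSum s G r :=
  Finset.sum_le_sum fun w _ => toNat_min_le_toNat_min (depth_reparent_le hq w) _

theorem depthSum_reparent_eq (hpx : (p, x) ∈ G) (hx : depth G r x = depth G r p + 1)
    (hpq : depth G r q = depth G r p) : depthSum s (reparent G p q x) r = depthSum s G r := by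
  have hq : depth G r q + 1 ≤ depth G r x := by rw [hx, hpq]
  refine Finset.sum_congr rfl fun w _ => ?_
  rw [le_antisymm (depth_reparent_le hq w) (depth_le_depth_reparent hpx hpq.ge w)]

theorem depthSum_reparent_lt (hr : r ∈ s) (hs : ∀ e ∈ G, e.2 ∈ s) (hx : x ∈ s)
    (hq : depth G r q + 1 < depth G r x) :
    depthSum s (reparent G p q x) r < depthSum s G r := by
  obtain ⟨a, ha⟩ := ENat.ne_top_iff_exists.mp
    (ne_top_of_lt ((le_self_add (b := 1)).trans_lt hq))
  refine depthSum_lt_sum_of_le (depth_reparent_le hq.le) hx (ha ▸ depth_reparent_self_le hq.le)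
    (ha ▸ hq) (add_two_le_card_of_lt_depth hr hs ha.symm hx ?_)
  exact ha ▸ le_self_add.trans_lt hq

theorem depthSum_swapParents_lt (hG : UniqueParents G r s) (hu : (up, u) ∈ G)
    (hv : (vp, v) ∈ G) (hleaf : ∀ c, (v, c) ∉ G) (huc : (u, c) ∈ G)
    (hvu : depth G r v < depth G r u) :
    depthSum s (swapParents G up u vp v) r < depthSum s G r := by
  obtain ⟨a, ha⟩ := ENat.ne_top_iff_exists.mp (ne_top_of_lt hvu)
  have hcu : c ≠ u := (hG.fst_ne_snd _ huc).symm
  have hcv : c ≠ v := by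
    rintro rfl
    exact (le_self_add.trans_eq (hG.depth_eq_add_one huc).symm).not_gt hvu
  have hbound :=
    depth_swapParents_le hu hv hleaf (hG.depth_eq_add_one hu) (hG.depth_eq_add_one hv) hvu
  have hc : depth (swapParents G up u vp v) r c ≤ a + 1 :=
    calc depth (swapParents G up u vp v) r c
        ≤ depth (swapParents G up u vp v) r u + 1 :=
          depth_le_depth_add_one (by simp [swapParents, huc, hcu, hcv])
      _ ≤ a + 1 := by gcongr; simpa [ha] using hbound u
  have hLc : (a : ℕ∞) + 1 < depth G r (Equiv.swap u v c) := by
    rw [Equiv.swap_apply_of_ne_of_ne hcu hcv, hG.depth_eq_add_one huc, ha]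
    exact ENat.add_lt_add_iff_right ENat.one_ne_top |>.mpr (ha ▸ hvu)
  have hsupp : {w | Equiv.swap u v w ≠ w} ⊆ s := fun w hw => by
    by_contra hws
    exact hw (Equiv.swap_apply_of_ne_of_ne (fun h => hws (h ▸ hG.snd_mem _ hu))
      (fun h => hws (h ▸ hG.snd_mem _ hv)))
  calc depthSum s (swapParents G up u vp v) r
      < ∑ w ∈ s, (min (depth G r (Equiv.swap u v w)) s.card).toNat :=
        depthSum_lt_sum_of_le hbound (hG.snd_mem _ huc) hc hLc
          (add_two_le_card_of_lt_depth hG.root_mem hG.snd_mem ha.symm (hG.snd_mem _ hu) (ha ▸ hvu))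
    _ = depthSum s G r :=
        Equiv.Perm.sum_comp (Equiv.swap u v) s (fun w => (min (depth G r w) s.card).toNat) hsupp

end TruncatedDepthSum

section OutDegree

variable {α : Type*} [DecidableEq α] {G : Finset (α × α)} {p q x : α} {s : Finset α}

theorem sum_mul_outDeg (f : α → ℕ) (hs : ∀ e ∈ G, e.1 ∈ s) :
    ∑ w ∈ s, f w * outDeg G w = ∑ e ∈ G, f e.1 := by
  rw [← Finset.sum_fiberwise_of_maps_to hs]
  refine Finset.sum_congr rfl fun w _ => ?_
  rw [Finset.sum_congr rfl fun e he => congrArg f (Finset.mem_filter.mp he).2,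
    Finset.sum_const, smul_eq_mul, mul_comm, outDeg]

theorem sum_mul_outDeg_reparent (f : α → ℕ) (hs : ∀ e ∈ G, e.1 ∈ s) (hq : q ∈ s)
    (hpx : (p, x) ∈ G) (hqx : (q, x) ∉ G) :
    ∑ w ∈ s, f w * outDeg (reparent G p q x) w + f p = ∑ w ∈ s, f w * outDeg G w + f q := by
  have hs' : ∀ e ∈ reparent G p q x, e.1 ∈ s := by
    intro e he
    rcases Finset.mem_insert.mp he with rfl | he
    · exact hq
    · exact hs e (Finset.mem_of_mem_erase he)
  rw [sum_mul_outDeg f hs, sum_mul_outDeg f hs', sum_fst_reparent f hpx hqx]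

end OutDegree

section Potential

variable {N M : ℕ} {C : Cfg} {i : ℕ}

def colorSum (M : ℕ) (φ : ℕ → Finset (ℕ × ℕ) → ℕ) (E : Cfg) : ℕ :=
  ∑ i ∈ R M, φ i (E i)

theorem colorSum_update {φ : ℕ → Finset (ℕ × ℕ) → ℕ} (hi : i ∈ R M) (G : Finset (ℕ × ℕ)) :
    colorSum M φ (Function.update C i G) + φ i (C i) = colorSum M φ C + φ i G := by
  unfold colorSum
  rw [← Finset.add_sum_erase _ _ hi, ← Finset.add_sum_erase _ _ hi, Function.update_self,
    Finset.sum_congr rfl fun l hl => by rw [Function.update_of_ne (Finset.ne_of_mem_erase hl)]]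
  ring

theorem colorSum_update_update {φ : ℕ → Finset (ℕ × ℕ) → ℕ} {j : ℕ} (hi : i ∈ R M) (hj : j ∈ R M)
    (hij : i ≠ j) (Gi Gj : Finset (ℕ × ℕ)) :
    colorSum M φ (Function.update (Function.update C i Gi) j Gj) + φ i (C i) + φ j (C j) =
      colorSum M φ C + φ i Gi + φ j Gj := by
  have h1 := colorSum_update (φ := φ) (C := Function.update C i Gi) hj Gj
  have h2 := colorSum_update (φ := φ) (C := C) hi Gi
  rw [Function.update_of_ne hij.symm] at h1
  omega

theorem numE_eq_colorSum : numE M C = colorSum M (fun _ G => G.card) C := rfl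

theorem Yval_eq_colorSum : Yval N M C = colorSum M (fun i G => depthSum (V N) G i) C := by
  simp only [Yval, colorSum, depthSum, V, Nat.card_Icc, add_tsub_cancel_right]
  exact Finset.sum_comm

theorem Sval_eq_colorSum :
    Sval N M C = colorSum M (fun i G => i * ∑ w ∈ V N, w * outDeg G w) C := by
  simp only [Sval, colorSum, Finset.mul_sum]
  rw [Finset.sum_comm]
  exact Finset.sum_congr rfl fun _ _ => Finset.sum_congr rfl fun _ _ => by ring

end Potential

section Moves

variable {N M K : ℕ} {dbar : ℕ → ℕ} {C : Cfg} {up u uc vp v i : ℕ}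

theorem uniqueParents_of_treeInit (hMN : M ≤ N) (hvalid : ValidEdges N M C)
    (htree : TreeInit N M K C) (hi : i ∈ R M) : UniqueParents (C i) i (V N) where
  root_mem := Finset.Icc_subset_Icc le_rfl hMN hi
  fst_mem e he := (hvalid i hi e he).1
  snd_mem e he := (hvalid i hi e he).2.1
  fst_ne_snd e he := (hvalid i hi e he).2.2
  parent_unique {a b x} ha hb := by
    have h := Finset.card_le_one.mp (htree.2.1 i hi x (hvalid i hi _ ha).2.1)
    exact congrArg Prod.fst (h (a, x) (by simp [ha]) (b, x) (by simp [hb]))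
  root_not_child a ha :=
    Finset.card_ne_zero.mpr ⟨(a, i), by simp [ha]⟩ (htree.2.2 i hi)

theorem update_eq_ite (C : Cfg) (i : ℕ) (F : Finset (ℕ × ℕ) → Finset (ℕ × ℕ)) :
    Function.update C i (F (C i)) = fun l => if l = i then F (C l) else C l := by
  funext l
  by_cases h : l = i <;> simp [h]

theorem numE_add_one_le_update (hi : i ∈ R M) {G : Finset (ℕ × ℕ)} (h : (C i).card < G.card) :
    numE M C + 1 ≤ numE M (Function.update C i G) := by
  have := colorSum_update (φ := fun _ G => G.card) (C := C) hi G
  simp only [← numE_eq_colorSum] at this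
  omega

theorem numE_eq_and_Yval_lt_update (hi : i ∈ R M) {G : Finset (ℕ × ℕ)}
    (hcard : G.card = (C i).card) (hY : depthSum (V N) G i < depthSum (V N) (C i) i) :
    numE M (Function.update C i G) = numE M C ∧
      Yval N M (Function.update C i G) + 1 ≤ Yval N M C := by
  have hE := colorSum_update (φ := fun _ G => G.card) (C := C) hi G
  have hY' := colorSum_update (φ := fun i G => depthSum (V N) G i) (C := C) hi G
  simp only [← numE_eq_colorSum, ← Yval_eq_colorSum] at hE hY'
  omega

theorem numE_lt_doAdd (h : AddApp N M K C dbar up u i) :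
    numE M C + 1 ≤ numE M (doAdd C up u i) := by
  obtain ⟨hi, -, -, -, hu, -, -⟩ := h
  rw [show doAdd C up u i = _ from (update_eq_ite C i (insert (up, u))).symm]
  refine numE_add_one_le_update hi ?_
  rw [Finset.card_insert_of_notMem fun h => hu (Or.inl ⟨up, h⟩)]
  exact lt_add_one _

theorem numE_lt_doInsert (hG : UniqueParents (C i) i (V N)) (h : InsertApp N M K C up u uc i) :
    numE M C + 1 ≤ numE M (doInsert C up u uc i) := by
  obtain ⟨hi, -, -, -, hu, hup, hupuc⟩ := h
  have hne : up ≠ u := fun h => hu (h ▸ hup)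
  have huuc : (u, uc) ∉ C i := fun h => hne (hG.parent_unique hupuc h)
  rw [show doInsert C up u uc i = _ from
    (update_eq_ite C i fun G => insert (up, u) (reparent G up u uc)).symm]
  refine numE_add_one_le_update hi ?_
  have hnew : (up, u) ∉ reparent (C i) up u uc := by
    simp only [reparent, Finset.mem_insert, Prod.mk.injEq, hne, false_and, false_or]
    exact fun h => hu (Or.inl ⟨up, Finset.mem_of_mem_erase h⟩)
  rw [Finset.card_insert_of_notMem hnew, card_reparent hupuc huuc]
  exact lt_add_one _

theorem numE_eq_and_Yval_lt_doJump (hG : UniqueParents (C i) i (V N)) (hu : (up, u) ∈ C i)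
    (h : JumpApp M C dbar u v i) :
    numE M (doJump C up u v i) = numE M C ∧ Yval N M (doJump C up u v i) + 1 ≤ Yval N M C := by
  obtain ⟨hi, -, -, -, hlt⟩ := h
  have hvu : (v, u) ∉ C i := fun h => (depth_le_depth_add_one h).not_gt hlt
  rw [show doJump C up u v i = _ from (update_eq_ite C i fun G => reparent G up v u).symm]
  exact numE_eq_and_Yval_lt_update hi (card_reparent hu hvu)
    (depthSum_reparent_lt hG.root_mem hG.snd_mem (hG.snd_mem _ hu) hlt)

theorem numE_eq_and_Yval_lt_doLeafSwap (hG : UniqueParents (C i) i (V N)) (hu : (up, u) ∈ C i)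
    (hv : (vp, v) ∈ C i) (h : LeafSwapApp M C u v i) :
    numE M (doLeafSwap C up u vp v i) = numE M C ∧
      Yval N M (doLeafSwap C up u vp v i) + 1 ≤ Yval N M C := by
  obtain ⟨hi, -, -, hleaf, hchild, hvu⟩ := h
  have hleaf' : ∀ c, (v, c) ∉ C i := fun c hc =>
    Finset.filter_eq_empty_iff.mp (Finset.card_eq_zero.mp hleaf) hc rfl
  obtain ⟨⟨u', c⟩, hu'c⟩ := Finset.card_pos.mp hchild
  obtain ⟨hu'c, hu' : u' = u⟩ := Finset.mem_filter.mp hu'c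
  have huc : (u, c) ∈ C i := hu' ▸ hu'c
  have hupvp : up ≠ vp := by
    rintro rfl
    rw [hG.depth_eq_add_one hu, ← hG.depth_eq_add_one hv] at hvu
    exact lt_irrefl _ hvu
  have huv : u ≠ v := by rintro rfl; exact lt_irrefl _ hvu
  rw [show doLeafSwap C up u vp v i = _ from
    (update_eq_ite C i fun G => swapParents G up u vp v).symm]
  exact numE_eq_and_Yval_lt_update hi
    (card_swapParents hu hv huv (fun h => hupvp (hG.parent_unique hu h))
      (fun h => hupvp (hG.parent_unique h hv)))
    (depthSum_swapParents_lt hG hu hv hleaf' huc hvu)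

end Moves

section MixSwap

variable {N M : ℕ} {C : Cfg} {u uc v vc i j : ℕ}

theorem doMixSwap_eq_update (hij : i ≠ j) :
    doMixSwap C u uc v vc i j =
      Function.update (Function.update C i (reparent (C i) u v uc)) j (reparent (C j) v u vc) := by
  funext l
  rcases eq_or_ne l j with rfl | hlj
  · simp [doMixSwap, reparent, hij.symm]
  · rcases eq_or_ne l i with rfl | hli
    · simp [doMixSwap, reparent, hlj]
    · simp [doMixSwap, hli, hlj]

theorem Sval_lt_mixSwap (hGi : UniqueParents (C i) i (V N)) (hGj : UniqueParents (C j) j (V N))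
    (hi : i ∈ R M) (hj : j ∈ R M) (hij : i ≠ j) (huv : u ≠ v) (hu : (u, uc) ∈ C i)
    (hv : (v, vc) ∈ C j) (hprod : ((u : ℤ) - v) * ((j : ℤ) - i) > 0) :
    Sval N M C + 1 ≤
      Sval N M (Function.update (Function.update C i (reparent (C i) u v uc)) j
        (reparent (C j) v u vc)) := by
  have hS := colorSum_update_update (φ := fun i G => i * ∑ w ∈ V N, w * outDeg G w) (C := C)
    hi hj hij (reparent (C i) u v uc) (reparent (C j) v u vc)
  simp only [← Sval_eq_colorSum] at hS
  have hAi := sum_mul_outDeg_reparent (fun w => w) hGi.fst_mem (hGj.fst_mem _ hv) hu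
    fun h => huv (hGi.parent_unique hu h)
  have hAj := sum_mul_outDeg_reparent (fun w => w) hGj.fst_mem (hGi.fst_mem _ hu) hv
    fun h => huv (hGj.parent_unique h hv)
  zify at hS hAi hAj ⊢
  linear_combination -hS - i * hAi - j * hAj + Int.add_one_le_of_lt hprod

theorem numE_eq_and_YS_lex_doMixSwap (hGi : UniqueParents (C i) i (V N))
    (hGj : UniqueParents (C j) j (V N)) (h : MixSwapApp M C u uc v vc i j) :
    numE M (doMixSwap C u uc v vc i j) = numE M C ∧
      (Yval N M (doMixSwap C u uc v vc i j) + 1 ≤ Yval N M C ∨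
        (Yval N M (doMixSwap C u uc v vc i j) = Yval N M C ∧
          Sval N M C + 1 ≤ Sval N M (doMixSwap C u uc v vc i j))) := by
  obtain ⟨hi, hj, hij, huv, hu, hv, -, -, hdi, hdj, hlex⟩ := h
  rw [doMixSwap_eq_update hij]
  have hdiuc := hGi.depth_eq_add_one hu
  have hdjvc := hGj.depth_eq_add_one hv
  have hE := colorSum_update_update (φ := fun _ G => G.card) (C := C) hi hj hij
    (reparent (C i) u v uc) (reparent (C j) v u vc)
  have hY := colorSum_update_update (φ := fun i G => depthSum (V N) G i) (C := C) hi hj hij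
    (reparent (C i) u v uc) (reparent (C j) v u vc)
  simp only [← numE_eq_colorSum, ← Yval_eq_colorSum,
    card_reparent hu fun h => huv (hGi.parent_unique hu h),
    card_reparent hv fun h => huv (hGj.parent_unique h hv)] at hE hY
  refine ⟨by omega, ?_⟩
  have hYi : depthSum (V N) (reparent (C i) u v uc) i ≤ depthSum (V N) (C i) i :=
    depthSum_reparent_le (by rw [hdiuc]; gcongr)
  have hYj : depthSum (V N) (reparent (C j) v u vc) j ≤ depthSum (V N) (C j) j :=
    depthSum_reparent_le (by rw [hdjvc]; gcongr)
  by_cases hstrict : depth (C i) i v < depth (C i) i u ∨ depth (C j) j u < depth (C j) j v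
  · left
    rcases hstrict with hlt | hlt
    · have : depthSum (V N) (reparent (C i) u v uc) i < depthSum (V N) (C i) i :=
        depthSum_reparent_lt hGi.root_mem hGi.snd_mem (hGi.snd_mem _ hu)
          (by rw [hdiuc]; exact (ENat.add_lt_add_iff_right ENat.one_ne_top).mpr hlt)
      omega
    · have : depthSum (V N) (reparent (C j) v u vc) j < depthSum (V N) (C j) j :=
        depthSum_reparent_lt hGj.root_mem hGj.snd_mem (hGj.snd_mem _ hv)
          (by rw [hdjvc]; exact (ENat.add_lt_add_iff_right ENat.one_ne_top).mpr hlt)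
      omega
  right
  simp only [not_or, not_lt] at hstrict
  have hdi' : depth (C i) i v = depth (C i) i u := le_antisymm hdi hstrict.1
  have hdj' : depth (C j) j u = depth (C j) j v := le_antisymm hdj hstrict.2
  rw [depthSum_reparent_eq hu hdiuc hdi', depthSum_reparent_eq hv hdjvc hdj'] at hY
  exact ⟨by omega, Sval_lt_mixSwap hGi hGj hi hj hij huv hu hv
    (hlex.resolve_left (by simp [hdi', hdj']))⟩

end MixSwap

theorem potential_decreases_general
    (N M K : ℕ) (hMN : M ≤ N)
    (dbar : ℕ → ℕ) (C C' : Cfg)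
    (hvalid : ValidEdges N M C) (htree : TreeInit N M K C)
    (hstep : Step N M K dbar C C') :
    numE M C + 1 ≤ numE M C' ∨
    (numE M C' = numE M C ∧ Yval N M C' + 1 ≤ Yval N M C) ∨
    (numE M C' = numE M C ∧ Yval N M C' = Yval N M C ∧
      Sval N M C + 1 ≤ Sval N M C') := by
  have hC : ∀ i ∈ R M, UniqueParents (C i) i (V N) :=
    fun i hi => uniqueParents_of_treeInit hMN hvalid htree hi
  rcases hstep with ⟨up, u, i, happ, rfl⟩ | ⟨up, u, uc, i, happ, rfl⟩ |
    ⟨up, u, v, i, hu, happ, rfl⟩ | ⟨up, u, vp, v, i, hu, hv, happ, rfl⟩ |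
    ⟨u, uc, v, vc, i, j, happ, rfl⟩
  · exact Or.inl (numE_lt_doAdd happ)
  · exact Or.inl (numE_lt_doInsert (hC i happ.1) happ)
  · exact Or.inr (Or.inl (numE_eq_and_Yval_lt_doJump (hC i happ.1) hu happ))
  · exact Or.inr (Or.inl (numE_eq_and_Yval_lt_doLeafSwap (hC i happ.1) hu hv happ))
  · obtain ⟨hE, hlex⟩ := numE_eq_and_YS_lex_doMixSwap (hC i happ.1) (hC j happ.2.1) happ
    exact Or.inr (hlex.imp (⟨hE, ·⟩) (⟨hE, ·⟩))

/-- performing any applicable Add, Insert, Jump, LeafSwap or MixSwap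
on a Tree Initially configuration makes the triple `(−|E|, Y, −S)` strictly
decrease lexicographically. -/
theorem potential_decreases
    (N M K : ℕ) (hK : 0 < K) (hKM : K ≤ M) (hMN : M ≤ N)
    (dbar : ℕ → ℕ) (C C' : Cfg)
    (hvalid : ValidEdges N M C) (htree : TreeInit N M K C)
    (hstep : Step N M K dbar C C') :
    numE M C + 1 ≤ numE M C' ∨
    (numE M C' = numE M C ∧ Yval N M C' + 1 ≤ Yval N M C) ∨
    (numE M C' = numE M C ∧ Yval N M C' = Yval N M C ∧
      Sval N M C + 1 ≤ Sval N M C') :=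
  potential_decreases_general N M K hMN dbar C C' hvalid htree hstep

end P2P
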